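/- Let n be a natural number. The projection homomorphism Aut_S(A_n) → Aut(W_n), (f, F) ↦ F, is surjective, its kernel is { (f, id) : f ∈ Aut_W(A_n) } ≅ Aut_W(A_n), and it admits a group-theoretic section; that is, the short exact sequence 1 → Aut_W(A_n) → Aut_S(A_n) → Aut(W_n) → 1 splits. -/

import Mathlib

def HWrels (n : ℕ) : Set (FreeGroup (Fin n)) :=
  {r | ∃ i j : Fin n, i ≠ j ∧
    r = (FreeGroup.of i)⁻¹ * FreeGroup.of j ^ 2 * FreeGroup.of i * FreeGroup.of j ^ 2}

abbrev HW (n : ℕ) : Type := PresentedGroup (HWrels n)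

def x (n : ℕ) (i : Fin n) : HW n := PresentedGroup.of i

def A (n : ℕ) : Subgroup (HW n) := Subgroup.closure (Set.range fun i => x n i ^ 2)

theorem HW.relation (n : ℕ) {i j : Fin n} (h : i ≠ j) :
    (x n i)⁻¹ * x n j ^ 2 * x n i * x n j ^ 2 = 1 := by
  have hr : ((FreeGroup.of i)⁻¹ * FreeGroup.of j ^ 2 * FreeGroup.of i * FreeGroup.of j ^ 2)
      ∈ HWrels n := ⟨i, j, h, rfl⟩
  have h2 : PresentedGroup.mk (HWrels n)
      ((FreeGroup.of i)⁻¹ * FreeGroup.of j ^ 2 * FreeGroup.of i * FreeGroup.of j ^ 2) = 1 :=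
    (QuotientGroup.eq_one_iff _).mpr (Subgroup.subset_normalClosure hr)
  rw [map_mul, map_mul, map_mul, map_inv, map_pow] at h2
  exact h2

theorem HW.conj_sq_mem (n : ℕ) (k j : Fin n) :
    x n k * x n j ^ 2 * (x n k)⁻¹ ∈ A n ∧ (x n k)⁻¹ * x n j ^ 2 * x n k ∈ A n := by
  have hj : x n j ^ 2 ∈ A n := Subgroup.subset_closure ⟨j, rfl⟩
  by_cases h : k = j
  · subst h
    have e1 : x n k * x n k ^ 2 * (x n k)⁻¹ = x n k ^ 2 := by group
    have e2 : (x n k)⁻¹ * x n k ^ 2 * x n k = x n k ^ 2 := by group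
    rw [e1, e2]; exact ⟨hj, hj⟩
  · have hrel := HW.relation n h
    have e2 : (x n k)⁻¹ * x n j ^ 2 * x n k = (x n j ^ 2)⁻¹ :=
      mul_eq_one_iff_eq_inv.mp hrel
    have h3 : x n j ^ 2 = x n k * (x n j ^ 2)⁻¹ * (x n k)⁻¹ := by
      rw [← e2]; group
    have e1 : x n k * x n j ^ 2 * (x n k)⁻¹ = (x n j ^ 2)⁻¹ := by
      calc x n k * x n j ^ 2 * (x n k)⁻¹
          = (x n k * (x n j ^ 2)⁻¹ * (x n k)⁻¹)⁻¹ := by group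
        _ = (x n j ^ 2)⁻¹ := by rw [← h3]
    rw [e1, e2]
    exact ⟨Subgroup.inv_mem _ hj, Subgroup.inv_mem _ hj⟩

instance A_normal (n : ℕ) : (A n).Normal := by
  let K : Subgroup (HW n) :=
    { carrier := {g | (∀ a ∈ A n, g * a * g⁻¹ ∈ A n) ∧ (∀ a ∈ A n, g⁻¹ * a * g ∈ A n)}
      one_mem' := by simp
      mul_mem' := by
        rintro g h ⟨hg1, hg2⟩ ⟨hh1, hh2⟩
        constructor
        · intro a ha
          have := hg1 _ (hh1 a ha)
          have e : g * (h * a * h⁻¹) * g⁻¹ = g * h * a * (g * h)⁻¹ := by group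
          rwa [e] at this
        · intro a ha
          have := hh2 _ (hg2 a ha)
          have e : h⁻¹ * (g⁻¹ * a * g) * h = (g * h)⁻¹ * a * (g * h) := by group
          rwa [e] at this
      inv_mem' := by
        rintro g ⟨hg1, hg2⟩
        constructor
        · intro a ha
          have := hg2 a ha
          have e : g⁻¹ * a * g = g⁻¹ * a * g⁻¹⁻¹ := by group
          rwa [e] at this
        · intro a ha
          have := hg1 a ha
          have e : g * a * g⁻¹ = g⁻¹⁻¹ * a * g⁻¹ := by group
          rwa [e] at this }
  have hgen : ∀ j : Fin n, PresentedGroup.of (rels := HWrels n) j ∈ K := by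
    intro j
    show (∀ a ∈ A n, x n j * a * (x n j)⁻¹ ∈ A n) ∧ (∀ a ∈ A n, (x n j)⁻¹ * a * x n j ∈ A n)
    constructor
    · intro a ha
      refine Subgroup.closure_induction ?_ ?_ ?_ ?_ ha
      · rintro b ⟨i, rfl⟩
        exact (HW.conj_sq_mem n j i).1
      · simpa using Subgroup.one_mem (A n)
      · intro b c _ _ hb hc
        have e : x n j * (b * c) * (x n j)⁻¹
            = (x n j * b * (x n j)⁻¹) * (x n j * c * (x n j)⁻¹) := by group
        rw [e]; exact Subgroup.mul_mem _ hb hc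
      · intro b _ hb
        have e : x n j * b⁻¹ * (x n j)⁻¹ = (x n j * b * (x n j)⁻¹)⁻¹ := by group
        rw [e]; exact Subgroup.inv_mem _ hb
    · intro a ha
      refine Subgroup.closure_induction ?_ ?_ ?_ ?_ ha
      · rintro b ⟨i, rfl⟩
        exact (HW.conj_sq_mem n j i).2
      · simpa using Subgroup.one_mem (A n)
      · intro b c _ _ hb hc
        have e : (x n j)⁻¹ * (b * c) * x n j
            = ((x n j)⁻¹ * b * x n j) * ((x n j)⁻¹ * c * x n j) := by group
        rw [e]; exact Subgroup.mul_mem _ hb hc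
      · intro b _ hb
        have e : (x n j)⁻¹ * b⁻¹ * x n j = ((x n j)⁻¹ * b * x n j)⁻¹ := by group
        rw [e]; exact Subgroup.inv_mem _ hb
  constructor
  intro a ha g
  exact ((PresentedGroup.generated_by (HWrels n) K hgen g).1) a ha

theorem A_comm (n : ℕ) : ∀ a ∈ A n, ∀ b ∈ A n, Commute a b := by
  have gen : ∀ i j : Fin n, Commute (x n i ^ 2) (x n j ^ 2) := by
    intro i j
    by_cases h : i = j
    · subst h; exact Commute.refl _
    · have e2 : (x n i)⁻¹ * x n j ^ 2 * x n i = (x n j ^ 2)⁻¹ :=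
        mul_eq_one_iff_eq_inv.mp (HW.relation n h)
      have h4 : ((x n i)⁻¹ * x n j ^ 2 * x n i)⁻¹ = x n j ^ 2 := by
        rw [e2, inv_inv]
      have e2' : (x n i)⁻¹ * (x n j ^ 2)⁻¹ * x n i = x n j ^ 2 := by
        conv_rhs => rw [← h4]
        group
      have key : (x n i ^ 2)⁻¹ * x n j ^ 2 * x n i ^ 2 = x n j ^ 2 := by
        have step1 : (x n i ^ 2)⁻¹ * x n j ^ 2 * x n i ^ 2
            = (x n i)⁻¹ * ((x n i)⁻¹ * x n j ^ 2 * x n i) * x n i := by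
          rw [pow_two (x n i)]; group
        rw [step1, e2]
        exact e2'
      have comm : x n j ^ 2 * x n i ^ 2 = x n i ^ 2 * x n j ^ 2 := by
        have step2 : x n j ^ 2 * x n i ^ 2
            = x n i ^ 2 * ((x n i ^ 2)⁻¹ * x n j ^ 2 * x n i ^ 2) := by group
        rw [step2, key]
      exact Commute.symm comm
  intro a ha
  refine Subgroup.closure_induction ?_ ?_ ?_ ?_ ha
  · rintro b ⟨i, rfl⟩
    intro c hc
    have inner : ∀ d ∈ A n, Commute d (x n i ^ 2) := by
      intro d hd
      refine Subgroup.closure_induction ?_ ?_ ?_ ?_ hd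
      · rintro e ⟨j, rfl⟩; exact gen j i
      · exact Commute.one_left _
      · intro e f _ _ he hf; exact he.mul_left hf
      · intro e _ he; exact he.inv_left
    exact (inner c hc).symm
  · intro b _; exact Commute.one_left _
  · intro b c _ _ hb hc d hd; exact (hb d hd).mul_left (hc d hd)
  · intro b _ hb d hd; exact (hb d hd).inv_left

/-- The quotient `W_n = G_n / A_n`. -/
abbrev Wq (n : ℕ) : Type := HW n ⧸ A n

/-- The generators `x̄_i` of `W_n = G_n/A_n`. -/
def xq (n : ℕ) (i : Fin n) : Wq n := QuotientGroup.mk (x n i)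

/-- `x_i²` as an element of `A_n`. -/
def xsq (n : ℕ) (i : Fin n) : ↥(A n) :=
  ⟨x n i ^ 2, Subgroup.subset_closure ⟨i, rfl⟩⟩

/-- The action of `w ∈ G_n` on `A_n` by conjugation, `w · a = w a w⁻¹`
(it factors through `W_n = G_n/A_n`). -/
def conjA (n : ℕ) (g : HW n) (a : ↥(A n)) : ↥(A n) :=
  ⟨g * a * g⁻¹, (A_normal n).conj_mem a.1 a.2 g⟩

/-- A pair `(f, F) ∈ Aut(A_n) × Aut(W_n)` is semi-linear if `f(w̄ · a) = F(w̄) · f(a)`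
for all `a ∈ A_n`, `w̄ ∈ W_n`, where the `W_n`-action on `A_n` is by conjugation. -/
def IsSemilinear (n : ℕ) (p : MulAut ↥(A n) × MulAut (Wq n)) : Prop :=
  ∀ (g g' : HW n) (a : ↥(A n)),
    (QuotientGroup.mk g' : Wq n) = p.2 (QuotientGroup.mk g) →
    p.1 (conjA n g a) = conjA n g' (p.1 a)

/-- The group `Aut_S(A_n)` of semi-linear automorphisms of the `W_n`-module `A_n`. -/
def AutS (n : ℕ) : Subgroup (MulAut ↥(A n) × MulAut (Wq n)) where
  carrier := {p | IsSemilinear n p}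
  one_mem' := by
    intro g g' a h
    simp only [Prod.snd_one, MulAut.one_apply] at h
    have hb : g'⁻¹ * g ∈ A n := QuotientGroup.eq.mp h
    show conjA n g a = conjA n g' a
    apply Subtype.ext
    show g * a * g⁻¹ = g' * a * g'⁻¹
    have hcomm : Commute (g'⁻¹ * g) a.1 := A_comm n _ hb a.1 a.2
    have hfix : g'⁻¹ * g * a.1 * (g'⁻¹ * g)⁻¹ = a.1 := by
      rw [hcomm.eq]; group
    calc g * a.1 * g⁻¹
        = g' * (g'⁻¹ * g * a.1 * (g'⁻¹ * g)⁻¹) * g'⁻¹ := by group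
      _ = g' * a.1 * g'⁻¹ := by rw [hfix]
  mul_mem' := by
    intro p q hp hq g g' a h
    obtain ⟨g2, hg2⟩ := QuotientGroup.mk_surjective (q.2 (QuotientGroup.mk g))
    have h1 := hq g g2 a hg2
    simp only [Prod.snd_mul, MulAut.mul_apply] at h
    have h2 := hp g2 g' (q.1 a) (by rw [h, hg2])
    show p.1 (q.1 (conjA n g a)) = conjA n g' (p.1 (q.1 a))
    rw [h1, h2]
  inv_mem' := by
    intro p hp g g' a h
    simp only [Prod.snd_inv] at h
    have h2 : (QuotientGroup.mk g : Wq n) = p.2 (QuotientGroup.mk g') := by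
      rw [h, MulAut.apply_inv_self]
    have h3 := hp g' g (p.1⁻¹ a) h2
    rw [MulAut.apply_inv_self] at h3
    show p.1⁻¹ (conjA n g a) = conjA n g' (p.1⁻¹ a)
    apply p.1.injective
    rw [MulAut.apply_inv_self, h3]

/-- An automorphism `f` of `A_n` is `W_n`-equivariant if `f(w̄ · a) = w̄ · f(a)`. -/
def IsEquivariant (n : ℕ) (f : MulAut ↥(A n)) : Prop :=
  ∀ (g : HW n) (a : ↥(A n)), f (conjA n g a) = conjA n g (f a)

/-- The group `Aut_W(A_n)` of `W_n`-equivariant automorphisms of `A_n`. -/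
def AutW (n : ℕ) : Subgroup (MulAut ↥(A n)) where
  carrier := {f | IsEquivariant n f}
  one_mem' := by intro g a; rfl
  mul_mem' := by
    intro f g hf hg w a
    exact (congrArg f (hg w a)).trans (hf w (g a))
  inv_mem' := by
    intro f hf g a
    apply f.injective
    rw [MulAut.apply_inv_self, hf g (f⁻¹ a), MulAut.apply_inv_self]

/-- The projection `Aut_S(A_n) → Aut(W_n)`, `(f, F) ↦ F`. -/
def projW (n : ℕ) : AutS n →* MulAut (Wq n) :=
  (MonoidHom.snd _ _).comp (AutS n).subtype

/-!
An automorphism `F` of `W_n` maps each generator `x̄ₖ` to an involution, and every involution of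
the free product `W_n` is conjugate to exactly one generator `x̄_{σ_F(k)}`: reduced words, on which
`W_n` acts by cancelling or prepending a letter, form a normal form, the reduced word of an
involution is a palindrome, hence of odd length and conjugate to its middle letter, and the
generator is unique because it is read off in the mod-2 abelianization. This makes `F ↦ σ_F` a
homomorphism `Aut(W_n) → Sₙ`. The conjugation action of `W_n` on `A_n` has abelian image (each
`x̄ᵢ` acts diagonally on the `x_j²` by signs), so it is constant on conjugacy classes; hence the
automorphism of `A_n` permuting the `x_j²` by `σ_F` is semilinear over `F`, and
`F ↦ (σ_F, F)` is a section. A pair `(f, 1)` is semilinear exactly when `f` is equivariant.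
-/

namespace List

section ToggleHead

variable {α : Type*} [DecidableEq α]

def toggleHead (a : α) : List α → List α
  | [] => [a]
  | b :: l => if b = a then l else a :: b :: l

theorem toggleHead_of_isChain_cons {a : α} {l : List α} (h : (a :: l).IsChain (· ≠ ·)) :
    toggleHead a l = a :: l := by
  cases l with
  | nil => rfl
  | cons b l => simp [toggleHead, Ne.symm (isChain_cons_cons.mp h).1]

theorem IsChain.toggleHead {l : List α} (h : l.IsChain (· ≠ ·)) (a : α) :
    (l.toggleHead a).IsChain (· ≠ ·) := by
  cases l with
  | nil => exact isChain_singleton a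
  | cons b l =>
    by_cases hb : b = a
    · simpa [List.toggleHead, hb] using h.tail
    · simpa only [List.toggleHead, hb, if_false] using isChain_cons_cons.mpr ⟨Ne.symm hb, h⟩

theorem toggleHead_toggleHead {l : List α} (h : l.IsChain (· ≠ ·)) (a : α) :
    (l.toggleHead a).toggleHead a = l := by
  cases l with
  | nil => simp [toggleHead]
  | cons b l =>
    by_cases hb : b = a
    · subst hb
      simpa [toggleHead] using toggleHead_of_isChain_cons h
    · simp [toggleHead, hb]

end ToggleHead

theorem prod_map_reverse_of_mul_self_eq_one {α G : Type*} [Group G] {f : α → G}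
    (hf : ∀ a, f a * f a = 1) (l : List α) : (l.reverse.map f).prod = (l.map f).prod⁻¹ := by
  have hinv : (fun g : G => g⁻¹) ∘ f = f := funext fun a => inv_eq_of_mul_eq_one_right (hf a)
  rw [prod_inv_reverse, map_map, hinv, map_reverse]

theorem Palindrome.exists_prod_map_eq_conj {α G : Type*} [Group G] {f : α → G}
    (hf : ∀ a, f a * f a = 1) {l : List α} (hl : l.Palindrome) (hc : l.IsChain (· ≠ ·))
    (hne : l ≠ []) : ∃ u a, (l.map f).prod = u * f a * u⁻¹ := by
  induction hl with
  | nil => exact absurd rfl hne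
  | singleton a => exact ⟨1, a, by simp⟩
  | cons_concat a hl ih =>
    rename_i l
    rcases eq_or_ne l [] with rfl | hl
    · exact absurd rfl (isChain_cons_cons.mp hc).1
    obtain ⟨u, b, hu⟩ := ih hc.tail.left_of_append hl
    refine ⟨f a * u, b, ?_⟩
    have hinv : (f a)⁻¹ = f a := inv_eq_of_mul_eq_one_right (hf a)
    simp only [map_cons, map_append, prod_cons, prod_append, hu, map_nil, prod_nil, mul_inv_rev,
      hinv]
    group

end List

abbrev ReducedWord (α : Type*) : Type _ := {l : List α // l.IsChain (· ≠ ·)}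

def ReducedWord.toggle {α : Type*} [DecidableEq α] (a : α) : Equiv.Perm (ReducedWord α) :=
  Function.Involutive.toPerm (fun w => ⟨w.1.toggleHead a, w.2.toggleHead a⟩)
    fun w => Subtype.ext (List.toggleHead_toggleHead w.2 a)

theorem ReducedWord.toggle_mul_self {α : Type*} [DecidableEq α] (a : α) :
    toggle a * toggle a = 1 :=
  Equiv.ext fun w => Subtype.ext (List.toggleHead_toggleHead w.2 a)

theorem MonoidHom.commute_of_closure_eq_top {G H : Type*} [Group G] [Group H] (f : G →* H)
    {s : Set G} (hs : Subgroup.closure s = ⊤) (hcomm : ∀ a ∈ s, ∀ b ∈ s, Commute (f a) (f b))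
    (u v : G) : Commute (f u) (f v) := by
  have hrange : f.range = Subgroup.closure (f '' s) := by
    rw [MonoidHom.range_eq_map, ← hs, MonoidHom.map_closure]
  have : IsMulCommutative f.range := by
    rw [hrange]
    refine Subgroup.isMulCommutative_closure ?_
    rintro _ ⟨a, ha, rfl⟩ _ ⟨b, hb, rfl⟩
    exact hcomm a ha b hb
  exact setLike_mul_comm (MonoidHom.mem_range.mpr ⟨u, rfl⟩) (MonoidHom.mem_range.mpr ⟨v, rfl⟩)

def MonoidHom.restrictMulAut {M G : Type*} [Group M] [Group G] (φ : M →* MulAut G)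
    (H : Subgroup G) (hH : ∀ m, ∀ h ∈ H, φ m h ∈ H) : M →* MulAut H where
  toFun m :=
    { toFun := fun h => ⟨φ m h, hH m h h.2⟩
      invFun := fun h => ⟨φ m⁻¹ (h : G), hH m⁻¹ h h.2⟩
      left_inv := fun h => Subtype.ext <| by simp [map_inv]
      right_inv := fun h => Subtype.ext <| by simp [map_inv]
      map_mul' := fun h h' => Subtype.ext <| map_mul (φ m) (h : G) h' }
  map_one' := MulEquiv.ext fun h => Subtype.ext <| by simp
  map_mul' m m' := MulEquiv.ext fun h => Subtype.ext <| by simp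

namespace Wq

variable {n : ℕ}

theorem xq_mul_self (i : Fin n) : xq n i * xq n i = 1 := by
  rw [xq, ← QuotientGroup.mk_mul, QuotientGroup.eq_one_iff, ← pow_two]
  exact Subgroup.subset_closure ⟨i, rfl⟩

variable (n) in
theorem closure_range_xq : Subgroup.closure (Set.range (xq n)) = ⊤ := by
  rw [← Subgroup.map_top_of_surjective _ (QuotientGroup.mk'_surjective (A n)),
    ← PresentedGroup.closure_range_of, MonoidHom.map_closure, ← Set.range_comp]
  rfl

section Lift

variable {G : Type*} [Group G] (f : Fin n → G)

theorem lift_rels_eq_one (hf : ∀ i, f i * f i = 1) : ∀ r ∈ HWrels n, FreeGroup.lift f r = 1 := by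
  rintro r ⟨i, j, -, rfl⟩
  simp [pow_two, hf]

def lift (hf : ∀ i, f i * f i = 1) : Wq n →* G :=
  QuotientGroup.lift (A n) (PresentedGroup.toGroup (lift_rels_eq_one f hf)) <|
    (Subgroup.closure_le _).mpr <| by
      rintro _ ⟨i, rfl⟩
      simp [x, pow_two, PresentedGroup.toGroup.of, hf]

theorem lift_xq (hf : ∀ i, f i * f i = 1) (i : Fin n) : lift f hf (xq n i) = f i :=
  PresentedGroup.toGroup.of (lift_rels_eq_one f hf)

end Lift

def parity : Wq n →* Multiplicative (Fin n → ZMod 2) :=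
  lift (fun i => .ofAdd (Pi.single i 1)) fun i => by
    rw [← ofAdd_add, ← Pi.single_add, show (1 : ZMod 2) + 1 = 0 from rfl, Pi.single_zero]
    rfl

theorem parity_conj (u w : Wq n) : parity (u * w * u⁻¹) = parity w := by
  rw [map_mul, map_mul, map_inv, mul_inv_cancel_comm]

theorem xq_ne_one (i : Fin n) : xq n i ≠ 1 := fun h => by
  simpa [parity, lift_xq] using congrFun (congrArg Multiplicative.toAdd (congrArg parity h)) i

theorem eq_of_conj_xq_eq_conj_xq {i j : Fin n} {u v : Wq n}
    (h : u * xq n i * u⁻¹ = v * xq n j * v⁻¹) : i = j := by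
  have h' : parity (xq n i) = parity (xq n j) := by rw [← parity_conj u, h, parity_conj]
  by_contra hij
  simpa [parity, lift_xq, Ne.symm hij] using congrFun (congrArg Multiplicative.toAdd h') i

def wordProd (l : List (Fin n)) : Wq n := (l.map (xq n)).prod

theorem wordProd_cons (i : Fin n) (l : List (Fin n)) : wordProd (i :: l) = xq n i * wordProd l :=
  List.prod_cons

theorem wordProd_reverse (l : List (Fin n)) : wordProd l.reverse = (wordProd l)⁻¹ :=
  List.prod_map_reverse_of_mul_self_eq_one xq_mul_self l

theorem wordProd_toggleHead (i : Fin n) (l : List (Fin n)) :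
    wordProd (l.toggleHead i) = xq n i * wordProd l := by
  cases l with
  | nil => simp [List.toggleHead, wordProd]
  | cons j l =>
    by_cases hj : j = i
    · simp [List.toggleHead, wordProd, hj, ← mul_assoc, xq_mul_self]
    · simp [List.toggleHead, wordProd, hj]

variable (n) in
def toggleAction : Wq n →* Equiv.Perm (ReducedWord (Fin n)) :=
  lift ReducedWord.toggle ReducedWord.toggle_mul_self

theorem toggleAction_wordProd {l : List (Fin n)} (hl : l.IsChain (· ≠ ·)) :
    toggleAction n (wordProd l) ⟨[], .nil⟩ = ⟨l, hl⟩ := by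
  induction l with
  | nil => rfl
  | cons i l ih =>
    rw [wordProd_cons, map_mul, Equiv.Perm.mul_apply, ih hl.tail, toggleAction, lift_xq]
    exact Subtype.ext (List.toggleHead_of_isChain_cons hl)

theorem eq_of_wordProd_eq {l l' : List (Fin n)} (hl : l.IsChain (· ≠ ·))
    (hl' : l'.IsChain (· ≠ ·)) (h : wordProd l = wordProd l') : l = l' := by
  have := toggleAction_wordProd hl
  rw [h, toggleAction_wordProd hl'] at this
  exact congrArg Subtype.val this.symm

theorem exists_wordProd_eq (w : Wq n) : ∃ l : List (Fin n), l.IsChain (· ≠ ·) ∧ wordProd l = w := by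
  have hw : w ∈ Subgroup.closure (Set.range (xq n)) := closure_range_xq n ▸ Subgroup.mem_top w
  induction hw using Subgroup.closure_induction_left with
  | one => exact ⟨[], .nil, rfl⟩
  | mul_left _ hi _ _ ih =>
    obtain ⟨i, rfl⟩ := hi
    obtain ⟨l, hl, rfl⟩ := ih
    exact ⟨l.toggleHead i, hl.toggleHead i, wordProd_toggleHead i l⟩
  | inv_mul_cancel _ hi _ _ ih =>
    obtain ⟨i, rfl⟩ := hi
    obtain ⟨l, hl, rfl⟩ := ih
    exact ⟨l.toggleHead i, hl.toggleHead i, by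
      rw [wordProd_toggleHead, inv_eq_of_mul_eq_one_right (xq_mul_self i)]⟩

theorem exists_eq_conj_xq_of_mul_self_eq_one {w : Wq n} (h2 : w * w = 1) (h1 : w ≠ 1) :
    ∃ u i, w = u * xq n i * u⁻¹ := by
  obtain ⟨l, hl, rfl⟩ := exists_wordProd_eq w
  have hrev : l.reverse = l := by
    refine eq_of_wordProd_eq (List.isChain_reverse.mpr (hl.imp fun _ _ h => Ne.symm h)) hl ?_
    rw [wordProd_reverse, inv_eq_of_mul_eq_one_right h2]
  have hne : l ≠ [] := by
    rintro rfl
    exact h1 rfl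
  exact (List.Palindrome.of_reverse_eq hrev).exists_prod_map_eq_conj xq_mul_self hl hne

theorem exists_map_xq_eq_conj (F : MulAut (Wq n)) (i : Fin n) :
    ∃ j u, F (xq n i) = u * xq n j * u⁻¹ := by
  obtain ⟨u, j, h⟩ := exists_eq_conj_xq_of_mul_self_eq_one
    (by rw [← map_mul, xq_mul_self, map_one]) ((map_ne_one_iff F F.injective).mpr (xq_ne_one i))
  exact ⟨j, u, h⟩

noncomputable def genIndex (F : MulAut (Wq n)) (i : Fin n) : Fin n :=
  (exists_map_xq_eq_conj F i).choose

theorem exists_map_xq_eq_conj_genIndex (F : MulAut (Wq n)) (i : Fin n) :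
    ∃ u, F (xq n i) = u * xq n (genIndex F i) * u⁻¹ :=
  (exists_map_xq_eq_conj F i).choose_spec

theorem genIndex_eq {F : MulAut (Wq n)} {i j : Fin n} {v : Wq n}
    (h : F (xq n i) = v * xq n j * v⁻¹) : genIndex F i = j := by
  obtain ⟨u, hu⟩ := exists_map_xq_eq_conj_genIndex F i
  exact eq_of_conj_xq_eq_conj_xq (hu.symm.trans h)

theorem genIndex_one (i : Fin n) : genIndex 1 i = i :=
  genIndex_eq (v := 1) (by simp)

theorem genIndex_mul (F G : MulAut (Wq n)) (i : Fin n) :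
    genIndex (F * G) i = genIndex F (genIndex G i) := by
  obtain ⟨u, hu⟩ := exists_map_xq_eq_conj_genIndex G i
  obtain ⟨v, hv⟩ := exists_map_xq_eq_conj_genIndex F (genIndex G i)
  refine genIndex_eq (v := F u * v) ?_
  rw [MulAut.mul_apply, hu, map_mul, map_mul, map_inv, hv]
  group

variable (n) in
noncomputable def genPerm : MulAut (Wq n) →* Equiv.Perm (Fin n) where
  toFun F :=
    { toFun := genIndex F
      invFun := genIndex F⁻¹
      left_inv i := by rw [← genIndex_mul, inv_mul_cancel, genIndex_one]
      right_inv i := by rw [← genIndex_mul, mul_inv_cancel, genIndex_one] }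
  map_one' := Equiv.ext genIndex_one
  map_mul' F G := Equiv.ext (genIndex_mul F G)

theorem exists_map_xq_eq_conj_genPerm (F : MulAut (Wq n)) (i : Fin n) :
    ∃ u, F (xq n i) = u * xq n (genPerm n F i) * u⁻¹ :=
  exists_map_xq_eq_conj_genIndex F i

end Wq

namespace A

variable {n : ℕ}

theorem closure_range_xsq : Subgroup.closure (Set.range (xsq n)) = ⊤ := by
  have h : Set.range (xsq n) = ((↑) : A n → HW n) ⁻¹' Set.range fun i => x n i ^ 2 := by
    ext a
    exact ⟨fun ⟨i, hi⟩ => ⟨i, congrArg Subtype.val hi⟩, fun ⟨i, hi⟩ => ⟨i, Subtype.ext hi⟩⟩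
  rw [h]
  exact Subgroup.closure_closure_coe_preimage

theorem mulAut_ext {φ ψ : MulAut (A n)} (h : ∀ i, φ (xsq n i) = ψ (xsq n i)) :
    φ = ψ :=
  MulEquiv.toMonoidHom_injective <|
    MonoidHom.eq_of_eqOn_dense closure_range_xsq (Set.forall_mem_range.mpr h)

end A

namespace HW

variable {n : ℕ}

theorem conj_x_sq_of_ne {i j : Fin n} (h : i ≠ j) :
    x n i * x n j ^ 2 * (x n i)⁻¹ = (x n j ^ 2)⁻¹ := by
  have hrel : (x n i)⁻¹ * x n j ^ 2 * x n i = (x n j ^ 2)⁻¹ :=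
    mul_eq_one_iff_eq_inv.mp (HW.relation n h)
  calc x n i * x n j ^ 2 * (x n i)⁻¹ = (x n i * (x n j ^ 2)⁻¹ * (x n i)⁻¹)⁻¹ := by group
    _ = (x n i * ((x n i)⁻¹ * x n j ^ 2 * x n i) * (x n i)⁻¹)⁻¹ := by rw [hrel]
    _ = (x n j ^ 2)⁻¹ := by group

variable (n) in
def conjW : Wq n →* MulAut (A n) :=
  QuotientGroup.lift (A n) MulAut.conjNormal fun a ha => MulEquiv.ext fun b => Subtype.ext <| by
    simp [(A_comm n a ha b b.2).eq]

theorem conjA_eq_conjW (g : HW n) (a : A n) : conjA n g a = conjW n g a := rfl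

theorem conjW_xq_xsq (i j : Fin n) :
    conjW n (xq n i) (xsq n j) = if i = j then xsq n j else (xsq n j)⁻¹ := by
  split_ifs with h
  · subst h
    exact Subtype.ext (show x n i * x n i ^ 2 * (x n i)⁻¹ = x n i ^ 2 by group)
  · exact Subtype.ext (conj_x_sq_of_ne h)

theorem commute_conjW_xq (i j : Fin n) : Commute (conjW n (xq n i)) (conjW n (xq n j)) :=
  A.mulAut_ext fun k => by
    by_cases hik : i = k <;> by_cases hjk : j = k <;> simp [conjW_xq_xsq, hik, hjk]

theorem commute_conjW (u v : Wq n) : Commute (conjW n u) (conjW n v) :=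
  (conjW n).commute_of_closure_eq_top (Wq.closure_range_xq n)
    (by rintro _ ⟨i, rfl⟩ _ ⟨j, rfl⟩; exact commute_conjW_xq i j) u v

theorem conjW_conj (u w : Wq n) : conjW n (u * w * u⁻¹) = conjW n w := by
  rw [map_mul, map_mul, (commute_conjW u w).eq, map_inv, mul_inv_cancel_right]

def permEnd (e : Equiv.Perm (Fin n)) : HW n →* HW n :=
  PresentedGroup.toGroup (f := fun i => x n (e i)) <| by
    rintro r ⟨i, j, hij, rfl⟩
    simpa using HW.relation n (e.injective.ne hij)

theorem permEnd_x (e : Equiv.Perm (Fin n)) (i : Fin n) : permEnd e (x n i) = x n (e i) :=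
  PresentedGroup.toGroup.of _

theorem permEnd_mul (e e' : Equiv.Perm (Fin n)) :
    permEnd (e * e') = (permEnd e).comp (permEnd e') :=
  PresentedGroup.ext fun i => by
    change permEnd (e * e') (x n i) = permEnd e (permEnd e' (x n i))
    rw [permEnd_x, permEnd_x, permEnd_x, Equiv.Perm.mul_apply]

theorem permEnd_one : permEnd (1 : Equiv.Perm (Fin n)) = MonoidHom.id _ :=
  PresentedGroup.ext fun i => permEnd_x 1 i

variable (n) in
def permAut : Equiv.Perm (Fin n) →* MulAut (HW n) where
  toFun e := (permEnd e).toMulEquiv (permEnd e⁻¹)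
    (by rw [← permEnd_mul, inv_mul_cancel, permEnd_one])
    (by rw [← permEnd_mul, mul_inv_cancel, permEnd_one])
  map_one' := MulEquiv.ext fun g => by simp [permEnd_one]
  map_mul' e e' := MulEquiv.ext fun g => by simp [permEnd_mul]

theorem permAut_x (e : Equiv.Perm (Fin n)) (i : Fin n) : permAut n e (x n i) = x n (e i) :=
  permEnd_x e i

theorem permAut_mem_A (e : Equiv.Perm (Fin n)) {a : HW n} (ha : a ∈ A n) :
    permAut n e a ∈ A n := by
  refine (Subgroup.closure_le (Subgroup.comap (permAut n e).toMonoidHom (A n))).mpr ?_ ha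
  rintro _ ⟨i, rfl⟩
  change permAut n e (x n i ^ 2) ∈ A n
  rw [map_pow, permAut_x]
  exact Subgroup.subset_closure ⟨e i, rfl⟩

variable (n) in
def permA : Equiv.Perm (Fin n) →* MulAut (A n) :=
  (permAut n).restrictMulAut (A n) fun e _ => permAut_mem_A e

theorem permA_conjA (e : Equiv.Perm (Fin n)) (g : HW n) (a : A n) :
    permA n e (conjA n g a) = conjA n (permAut n e g) (permA n e a) :=
  Subtype.ext (by simp [permA, MonoidHom.restrictMulAut, conjA])

theorem conjW_permAut_genPerm (F : MulAut (Wq n)) (g : HW n) :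
    conjW n (permAut n (Wq.genPerm n F) g) = conjW n (F g) := by
  have : (conjW n).comp ((QuotientGroup.mk' (A n)).comp (permAut n (Wq.genPerm n F)).toMonoidHom)
      = (conjW n).comp (F.toMonoidHom.comp (QuotientGroup.mk' (A n))) := by
    refine PresentedGroup.ext fun i => ?_
    obtain ⟨u, hu⟩ := Wq.exists_map_xq_eq_conj_genPerm F i
    change conjW n (permAut n _ (x n i)) = conjW n (F (xq n i))
    rw [permAut_x, hu, conjW_conj]
    rfl
  exact DFunLike.congr_fun this g

end HW

namespace AutS

variable {n : ℕ}

theorem isSemilinear_permA_genPerm (F : MulAut (Wq n)) :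
    IsSemilinear n (HW.permA n (Wq.genPerm n F), F) := by
  intro g g' a h
  rw [HW.permA_conjA, HW.conjA_eq_conjW, HW.conjA_eq_conjW, HW.conjW_permAut_genPerm, h]

theorem isSemilinear_one_iff {f : MulAut (A n)} : IsSemilinear n (f, 1) ↔ IsEquivariant n f := by
  refine ⟨fun h g a => h g g a rfl, fun h g g' a hg => ?_⟩
  rw [h, HW.conjA_eq_conjW, HW.conjA_eq_conjW, hg]
  rfl

variable (n) in
noncomputable def splitProjW : MulAut (Wq n) →* AutS n :=
  (((HW.permA n).comp (Wq.genPerm n)).prod (MonoidHom.id _)).codRestrict (AutS n)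
    isSemilinear_permA_genPerm

theorem projW_comp_splitProjW : (projW n).comp (splitProjW n) = MonoidHom.id _ := rfl

theorem mem_ker_projW_iff (p : AutS n) :
    p ∈ (projW n).ker ↔ (p : MulAut (A n) × MulAut (Wq n)).2 = 1 ∧
      (p : MulAut (A n) × MulAut (Wq n)).1 ∈ AutW n := by
  obtain ⟨⟨f, F⟩, hp⟩ := p
  refine ⟨fun hF => ⟨hF, ?_⟩, fun h => h.1⟩
  change F = 1 at hF
  subst hF
  exact isSemilinear_one_iff.mp hp

variable (n) in
def kerProjWEquivAutW : (projW n).ker ≃* AutW n where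
  toFun p := ⟨p.1.1.1, ((mem_ker_projW_iff p.1).1 p.2).2⟩
  invFun f := ⟨⟨(f, 1), isSemilinear_one_iff.mpr f.2⟩, rfl⟩
  left_inv p := Subtype.ext <| Subtype.ext <| Prod.ext rfl ((mem_ker_projW_iff p.1).1 p.2).1.symm
  right_inv _ := rfl
  map_mul' _ _ := rfl

end AutS

/-- Corollary `splits`, first sequence: the projection
`Aut_S(A_n) → Aut(W_n)` is surjective, has kernel `{(f, id) : f ∈ Aut_W(A_n)} ≅ Aut_W(A_n)`,
and admits a group-theoretic section; i.e. `1 → Aut_W(A_n) → Aut_S(A_n) → Aut(W_n) → 1`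
is a split short exact sequence. -/
theorem stmt16 (n : ℕ) :
    Function.Surjective (projW n) ∧
    (∀ p : AutS n, p ∈ (projW n).ker ↔
      ((p : MulAut ↥(A n) × MulAut (Wq n)).2 = 1 ∧
        (p : MulAut ↥(A n) × MulAut (Wq n)).1 ∈ AutW n)) ∧
    Nonempty ((projW n).ker ≃* AutW n) ∧
    ∃ s : MulAut (Wq n) →* AutS n, (projW n).comp s = MonoidHom.id _ :=
  ⟨fun F => ⟨AutS.splitProjW n F, DFunLike.congr_fun AutS.projW_comp_splitProjW F⟩,
    AutS.mem_ker_projW_iff, ⟨AutS.kerProjWEquivAutW n⟩, AutS.splitProjW n,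
    AutS.projW_comp_splitProjW⟩
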